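/- Define τ := liminf_{m→∞} m^{2/3}·inf{ E(Y) : Y ⊆ Q, #Y = m }. Then for every n ≥ 1 and every minimizer Y_n of the quantization energy among subsets of Q with n points, one has n^{2/3}·E(Y_n) ≥ τ. -/

import Mathlib

open MeasureTheory

noncomputable section

/-- Euclidean 3-space. -/
abbrev E3 := EuclideanSpace ℝ (Fin 3)

/-- The closed unit cube Q = [0,1]³. -/
def Qcube : Set E3 := {x | ∀ i, x i ∈ Set.Icc (0 : ℝ) 1}

/-- The quantization energy E(Y) = ∫_Q dist(x,Y)² dx. -/
def quantE (Y : Finset E3) : ℝ := ∫ x in Qcube, (Metric.infDist x (↑Y : Set E3)) ^ 2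

/-- The Voronoi cell of a generator y ∈ Y, relative to Q. -/
def vorCell (Y : Finset E3) (y : E3) : Set E3 :=
  {x ∈ Qcube | ∀ z ∈ Y, dist x y ≤ dist x z}

/-- Y is a minimizer of the quantization energy among n-point subsets of Q. -/
def IsMinimizer (n : ℕ) (Y : Finset E3) : Prop :=
  (↑Y : Set E3) ⊆ Qcube ∧ Y.card = n ∧
    ∀ Z : Finset E3, (↑Z : Set E3) ⊆ Qcube → Z.card = n → quantE Y ≤ quantE Z

/-- ω₃ = 4π/3, the volume of the unit ball in ℝ³. -/
def omega3 : ℝ := 4 * Real.pi / 3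

/-- Γ₁ = (2/5)^{2/3} / 40. -/
def Gamma1 : ℝ := ((2 / 5 : ℝ) ^ ((2 : ℝ) / 3)) / 40

/-- Γ₃ = ω₃^{-1/5} Γ₁^{1/5}. -/
def Gamma3 : ℝ := omega3 ^ (-(1 : ℝ) / 5) * Gamma1 ^ ((1 : ℝ) / 5)

/-- Γ₅ = (1/4)(√(1 + 2⁴·3³/(5²·10³)) − 1) Γ₃. -/
def Gamma5 : ℝ :=
  (1 / 4) * (Real.sqrt (1 + (2 ^ 4 * 3 ^ 3 : ℝ) / (5 ^ 2 * 10 ^ 3)) - 1) * Gamma3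

/-- Γ₄, the diameter upper-bound constant. -/
def Gamma4 : ℝ :=
  (2 * (12 : ℝ) ^ ((1 : ℝ) / 4) * (16 : ℝ) ^ ((1 : ℝ) / 3) /
      (Real.pi ^ ((1 : ℝ) / 4) * omega3 ^ ((1 : ℝ) / 12))) *
    (Real.sqrt (1 + (2 ^ 4 * 3 ^ 3 : ℝ) / (5 ^ 2 * 10 ^ 3)) - 1) ^ (-(1 : ℝ) / 2) *
    ((5 ^ 2 * 10 ^ 3 : ℝ) / (2 ^ 2 * 3 ^ 3)) ^ ((1 : ℝ) / 4)

/-- τ = liminf_{m→∞} m^{2/3} · inf { E(Y) : Y ⊆ Q, #Y = m }. -/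
def tau : ℝ :=
  Filter.liminf
    (fun m : ℕ =>
      (m : ℝ) ^ ((2 : ℝ) / 3) *
        sInf {e : ℝ | ∃ Z : Finset E3, (↑Z : Set E3) ⊆ Qcube ∧ Z.card = m ∧ e = quantE Z})
    Filter.atTop

/-! Tile `Q` by the `k³` subcubes of side `1 / k` and put a copy of `Y`, shrunk by `1 / k`, in each.
This gives between `k³` and `k³ n` points of `Q` whose energy is at most `E(Y) / k²`: on each subcube
squared distances shrink by `k⁻²` and volume by `k⁻³`. Since `(k³ n)^{2/3} / k² = n^{2/3}`, the
sequence defining `τ` is at most `n^{2/3} E(Y)` at arbitrarily large indices. -/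

open Set

lemma setIntegral_le_sum_of_subset_iUnion {α ι : Type*} [MeasurableSpace α] {μ : Measure α}
    [Fintype ι] {s : Set α} {t : ι → Set α} (hst : s ⊆ ⋃ i, t i) {f : α → ℝ} (hf : 0 ≤ f)
    (hfi : ∀ i, IntegrableOn f (t i) μ) :
    ∫ x in s, f x ∂μ ≤ ∑ i, ∫ x in t i, f x ∂μ := by
  have hle : μ.restrict s ≤ ∑ i, μ.restrict (t i) := by
    rw [← Measure.sum_fintype]
    exact (Measure.restrict_mono hst le_rfl).trans Measure.restrict_iUnion_le
  rw [← integral_finsetSum_measure (fun i _ => hfi i)]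
  exact integral_mono_measure hle (Filter.Eventually.of_forall hf)
    (integrable_finsetSum_measure.2 fun i _ => hfi i)

lemma integrableOn_infDist_sq {X : Type*} [MetricSpace X] [MeasurableSpace X]
    [OpensMeasurableSpace X] {μ : Measure X} [IsFiniteMeasureOnCompacts μ] {s : Set X}
    (hs : IsCompact s) (S : Set X) :
    IntegrableOn (fun x => Metric.infDist x S ^ 2) s μ :=
  ((Metric.continuous_infDist_pt S).pow 2).continuousOn.integrableOn_compact hs

lemma isCompact_Qcube : IsCompact Qcube := by
  have : Qcube = PiLp.homeomorph 2 (fun _ : Fin 3 => ℝ) ⁻¹' univ.pi fun _ => Icc 0 1 := by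
    ext x; simp [Qcube, PiLp.homeomorph, Pi.le_def, forall_and]
  rw [this, Homeomorph.isCompact_preimage]
  exact isCompact_univ_pi fun _ => isCompact_Icc

lemma measurableSet_Qcube : MeasurableSet Qcube :=
  isCompact_Qcube.isClosed.measurableSet

lemma quantE_nonneg (Y : Finset E3) : 0 ≤ quantE Y :=
  integral_nonneg fun _ => sq_nonneg _

lemma exists_fin_sub_mem_Icc {k : ℕ} (hk : 0 < k) {t : ℝ} (ht : t ∈ Icc (0 : ℝ) 1) :
    ∃ j : Fin k, k * t - j ∈ Icc (0 : ℝ) 1 := by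
  have hkt : 0 ≤ k * t := mul_nonneg k.cast_nonneg ht.1
  -- the cap `k - 1` only matters at `t = 1`
  refine ⟨⟨min ⌊k * t⌋₊ (k - 1), by omega⟩, ?_, ?_⟩
  · have : ((min ⌊k * t⌋₊ (k - 1) : ℕ) : ℝ) ≤ k * t :=
      (Nat.cast_le.2 (min_le_left _ _)).trans (Nat.floor_le hkt)
    simpa using this
  · have hfloor : k * t ≤ ⌊k * t⌋₊ + 1 := (Nat.lt_floor_add_one _).le
    have hlast : k * t ≤ ((k - 1 : ℕ) : ℝ) + 1 := by
      rw [Nat.cast_sub hk, Nat.cast_one, sub_add_cancel]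
      nlinarith [ht.2]
    have : k * t - 1 ≤ ((min ⌊k * t⌋₊ (k - 1) : ℕ) : ℝ) := by
      rw [Nat.cast_min]; exact le_min (by linarith) (by linarith)
    simp only [sub_le_iff_le_add]
    linarith

def subcubeMap (k : ℕ) (v : Fin 3 → Fin k) (u : E3) : E3 :=
  (k : ℝ)⁻¹ • (u + WithLp.toLp 2 fun i => (v i : ℝ))

lemma subcubeMap_apply (k : ℕ) (v : Fin 3 → Fin k) (u : E3) (i : Fin 3) :
    subcubeMap k v u i = (u i + v i) / k := by
  simp [subcubeMap, inv_mul_eq_div, add_div]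

lemma continuous_subcubeMap (k : ℕ) (v : Fin 3 → Fin k) : Continuous (subcubeMap k v) := by
  unfold subcubeMap
  fun_prop

lemma dist_subcubeMap (k : ℕ) (v : Fin 3 → Fin k) (u w : E3) :
    dist (subcubeMap k v u) (subcubeMap k v w) = (k : ℝ)⁻¹ * dist u w := by
  rw [subcubeMap, subcubeMap, dist_smul₀, dist_add_right, Real.norm_of_nonneg (by positivity)]

lemma subcubeMap_mem_Qcube {k : ℕ} (v : Fin 3 → Fin k) {u : E3} (hu : u ∈ Qcube) :
    subcubeMap k v u ∈ Qcube := by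
  intro i
  have hv : (v i : ℝ) + 1 ≤ k := by exact_mod_cast (v i).isLt
  have hk : (0 : ℝ) < k := by linarith [(v i : ℕ).cast_nonneg (α := ℝ)]
  rw [subcubeMap_apply]
  constructor
  · have := (hu i).1; positivity
  · rw [div_le_one hk]; linarith [(hu i).2]

lemma Qcube_subset_iUnion_image_subcubeMap {k : ℕ} (hk : 0 < k) :
    Qcube ⊆ ⋃ v, subcubeMap k v '' Qcube := by
  intro x hx
  choose v hv using fun i => exists_fin_sub_mem_Icc hk (hx i)
  refine mem_iUnion.2 ⟨v, WithLp.toLp 2 fun i => k * x i - v i, hv, ?_⟩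
  ext i
  rw [subcubeMap_apply]
  field_simp
  simp

lemma setIntegral_image_subcubeMap {k : ℕ} (hk : 0 < k) (v : Fin 3 → Fin k) (g : E3 → ℝ) :
    ∫ x in subcubeMap k v '' Qcube, g x = ((k : ℝ)⁻¹) ^ 3 * ∫ u in Qcube, g (subcubeMap k v u) := by
  have hderiv : ∀ u ∈ Qcube, HasFDerivWithinAt (subcubeMap k v)
      ((k : ℝ)⁻¹ • ContinuousLinearMap.id ℝ E3) Qcube u := fun u _ =>
    (((hasFDerivAt_id u).add_const _).const_smul (k : ℝ)⁻¹).hasFDerivWithinAt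
  have hinj : InjOn (subcubeMap k v) Qcube := fun u _ w _ h =>
    add_right_cancel (smul_right_injective E3 (by positivity) h)
  have hdet : ((k : ℝ)⁻¹ • ContinuousLinearMap.id ℝ E3).det = ((k : ℝ)⁻¹) ^ 3 := by
    rw [ContinuousLinearMap.det, ContinuousLinearMap.toLinearMap_smul, ContinuousLinearMap.coe_id,
      LinearMap.det_smul, LinearMap.det_id, finrank_euclideanSpace_fin, mul_one]
  rw [integral_image_eq_integral_abs_det_fderiv_smul volume measurableSet_Qcube hderiv hinj,
    hdet, abs_of_nonneg (by positivity), ← integral_const_mul]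
  rfl

open Classical in
def subcubeCopies (k : ℕ) (Y : Finset E3) : Finset E3 :=
  (Finset.univ ×ˢ Y).image fun p : (Fin 3 → Fin k) × E3 => subcubeMap k p.1 p.2

section subcubeCopies

variable {k : ℕ} {Y : Finset E3}

lemma subcubeMap_mem_subcubeCopies (v : Fin 3 → Fin k) {y : E3} (hy : y ∈ Y) :
    subcubeMap k v y ∈ subcubeCopies k Y :=
  Finset.mem_image.2 ⟨(v, y), Finset.mem_product.2 ⟨Finset.mem_univ _, hy⟩, rfl⟩

lemma subcubeCopies_subset_Qcube (hY : (↑Y : Set E3) ⊆ Qcube) :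
    (↑(subcubeCopies k Y) : Set E3) ⊆ Qcube := by
  intro x hx
  obtain ⟨⟨v, y⟩, hvy, rfl⟩ := Finset.mem_image.1 hx
  exact subcubeMap_mem_Qcube v (hY (Finset.mem_product.1 hvy).2)

lemma card_subcubeCopies_le : (subcubeCopies k Y).card ≤ k ^ 3 * Y.card :=
  Finset.card_image_le.trans (by simp)

lemma le_card_subcubeCopies (hY : Y.Nonempty) : k ^ 3 ≤ (subcubeCopies k Y).card := by
  obtain ⟨y, hy⟩ := hY
  have hinj : InjOn (fun v => subcubeMap k v y) (Finset.univ : Finset (Fin 3 → Fin k)) := by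
    intro v _ w _ hvw
    funext i
    have hk : (k : ℝ) ≠ 0 := by have := (v i).pos; positivity
    have := congrArg (· i) hvw
    simp only [subcubeMap_apply, div_left_inj' hk, add_right_inj, Nat.cast_inj] at this
    exact Fin.ext this
  simpa using Finset.card_le_card_of_injOn _ (fun v _ => subcubeMap_mem_subcubeCopies v hy) hinj

lemma infDist_subcubeMap_le (hY : Y.Nonempty) (v : Fin 3 → Fin k) (u : E3) :
    Metric.infDist (subcubeMap k v u) (subcubeCopies k Y) ≤ (k : ℝ)⁻¹ * Metric.infDist u Y := by
  obtain ⟨y, hy, hdist⟩ := Y.finite_toSet.isCompact.exists_infDist_eq_dist (by simpa using hY) u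
  rw [hdist, ← dist_subcubeMap]
  exact Metric.infDist_le_dist_of_mem (subcubeMap_mem_subcubeCopies v hy)

lemma quantE_subcubeCopies_le (hk : 0 < k) (hY : Y.Nonempty) :
    quantE (subcubeCopies k Y) ≤ quantE Y / k ^ 2 := by
  set g := fun x => Metric.infDist x (subcubeCopies k Y : Set E3) ^ 2
  have hsub : ∀ v, ∫ u in Qcube, g (subcubeMap k v u) ≤ ((k : ℝ)⁻¹) ^ 2 * quantE Y := by
    intro v
    rw [quantE, ← integral_const_mul]
    refine setIntegral_mono_on ?_ ?_ measurableSet_Qcube fun u _ => ?_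
    · exact (((Metric.continuous_infDist_pt _).pow 2).comp
        (continuous_subcubeMap k v)).continuousOn.integrableOn_compact isCompact_Qcube
    · exact (integrableOn_infDist_sq isCompact_Qcube _).const_mul _
    · rw [← mul_pow]
      exact pow_le_pow_left₀ Metric.infDist_nonneg (infDist_subcubeMap_le hY v u) 2
  calc quantE (subcubeCopies k Y)
      ≤ ∑ v, ∫ x in subcubeMap k v '' Qcube, g x :=
        setIntegral_le_sum_of_subset_iUnion (Qcube_subset_iUnion_image_subcubeMap hk)
          (fun _ => sq_nonneg _) fun v => integrableOn_infDist_sq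
            (isCompact_Qcube.image (continuous_subcubeMap k v)) _
    _ ≤ ∑ _v : Fin 3 → Fin k, ((k : ℝ)⁻¹) ^ 3 * (((k : ℝ)⁻¹) ^ 2 * quantE Y) := by
        gcongr with v
        rw [setIntegral_image_subcubeMap hk]
        gcongr
        exact hsub v
    _ = quantE Y / k ^ 2 := by
        simp only [Finset.sum_const, Finset.card_univ, Fintype.card_fun, Fintype.card_fin,
          nsmul_eq_mul, Nat.cast_pow]
        field_simp

end subcubeCopies

def minEnergy (m : ℕ) : ℝ :=
  sInf {e : ℝ | ∃ Z : Finset E3, (↑Z : Set E3) ⊆ Qcube ∧ Z.card = m ∧ e = quantE Z}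

lemma minEnergy_nonneg (m : ℕ) : 0 ≤ minEnergy m :=
  Real.sInf_nonneg fun _ ⟨Z, _, _, he⟩ => he ▸ quantE_nonneg Z

lemma minEnergy_card_le {Z : Finset E3} (hZ : (↑Z : Set E3) ⊆ Qcube) :
    minEnergy Z.card ≤ quantE Z :=
  csInf_le ⟨0, fun _ ⟨W, _, _, he⟩ => he ▸ quantE_nonneg W⟩ ⟨Z, hZ, rfl, rfl⟩

lemma natCast_cube_mul_rpow_two_thirds (k n : ℕ) :
    ((k ^ 3 * n : ℕ) : ℝ) ^ ((2 : ℝ) / 3) = k ^ 2 * (n : ℝ) ^ ((2 : ℝ) / 3) := by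
  rw [Nat.cast_mul, Real.mul_rpow (by positivity) n.cast_nonneg, Nat.cast_pow,
    ← Real.rpow_natCast, ← Real.rpow_mul k.cast_nonneg]
  norm_num

theorem stmt_7 (n : ℕ) (hn : 1 ≤ n) (Y : Finset E3) (hY : IsMinimizer n Y) :
    (n : ℝ) ^ ((2 : ℝ) / 3) * quantE Y ≥ tau := by
  obtain ⟨hYQ, rfl, -⟩ := hY
  have hYne : Y.Nonempty := Finset.card_pos.1 hn
  refine Filter.liminf_le_of_frequently_le
    (Filter.frequently_atTop.2 fun N => ⟨(subcubeCopies (N + 1) Y).card, ?_, ?_⟩)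
    (Filter.isBoundedUnder_of ⟨0, fun m => mul_nonneg (by positivity) (minEnergy_nonneg m)⟩)
  · calc N ≤ (N + 1) ^ 3 := (Nat.le_succ N).trans (Nat.le_self_pow (by norm_num) _)
      _ ≤ _ := le_card_subcubeCopies hYne
  · set Z := subcubeCopies (N + 1) Y
    calc (Z.card : ℝ) ^ ((2 : ℝ) / 3) * minEnergy Z.card
        ≤ (((N + 1) ^ 3 * Y.card : ℕ) : ℝ) ^ ((2 : ℝ) / 3) * (quantE Y / (N + 1 : ℕ) ^ 2) := by
          refine mul_le_mul ?_ ?_ (minEnergy_nonneg _) (by positivity)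
          · gcongr
            exact card_subcubeCopies_le
          · exact (minEnergy_card_le (subcubeCopies_subset_Qcube hYQ)).trans
              (quantE_subcubeCopies_le N.succ_pos hYne)
      _ = (Y.card : ℝ) ^ ((2 : ℝ) / 3) * quantE Y := by
          rw [natCast_cube_mul_rpow_two_thirds]
          field_simp
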